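/- In the matrix-decomposition setting below, [V_00 ⊗ Λ(0,0), V_00 ⊗ Λ(0,0)] ⊆ L, i.e. the commutator of any two elements of V_00 ⊗ Λ(0,0) lies in L. -/

import Mathlib

/-! Statement 14: in the matrix-decomposition setting, `[V_00 ⊗ Λ(0,0), V_00 ⊗ Λ(0,0)] ⊆ L`. -/

open scoped TensorProduct DirectSum

universe u v w

/-- `n` extended to `Î = I ∪ {0}` (`none` playing the role of `0`), with `n_0 = 1`. -/
abbrev nopt {I : Type} (n : I → ℕ) : Option I → ℕ
  | none => 1
  | some i => n i

variable (F : Type u) [Field F] [IsAlgClosed F]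
  {I : Type} [Fintype I] [DecidableEq I] [Nonempty I] {n : I → ℕ}
  {Λ : Option I → Option I → Type v}
  [∀ i j, AddCommGroup (Λ i j)] [∀ i j, Module F (Λ i j)]
  {A : Type w} [NonUnitalRing A] [Module F A] [SMulCommClass F A A] [IsScalarTower F A A]

/-- The image in `A` of an element `u ∈ V_ij ⊗ Λ(i,j)` under the identification `ψ`
of `A` with `⊕_{i,j ∈ Î} V_ij ⊗ Λ(i,j)`. -/
noncomputable def emb (ψ : (⨁ p : Option I × Option I,
      Matrix (Fin (nopt n p.1)) (Fin (nopt n p.2)) F ⊗[F] Λ p.1 p.2) ≃ₗ[F] A)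
    (p : Option I × Option I)
    (u : Matrix (Fin (nopt n p.1)) (Fin (nopt n p.2)) F ⊗[F] Λ p.1 p.2) : A :=
  ψ (DirectSum.lof F (Option I × Option I)
    (fun q => Matrix (Fin (nopt n q.1)) (Fin (nopt n q.2)) F ⊗[F] Λ q.1 q.2) p u)

/-- The image in `A` of a pure tensor `X ⊗ a ∈ V_ij ⊗ Λ(i,j)`. -/
noncomputable def elt (ψ : (⨁ p : Option I × Option I,
      Matrix (Fin (nopt n p.1)) (Fin (nopt n p.2)) F ⊗[F] Λ p.1 p.2) ≃ₗ[F] A)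
    (i j : Option I) (X : Matrix (Fin (nopt n i)) (Fin (nopt n j)) F) (a : Λ i j) : A :=
  emb F ψ (i, j) (X ⊗ₜ a)

/-- The union of the subspaces `V'_ij ⊗ Λ(i,j)`, `(i,j) ≠ (0,0)`, where `V'_ii` consists
of the trace-zero matrices and `V'_ij = V_ij` for `i ≠ j`. -/
def lieGens (ψ : (⨁ p : Option I × Option I,
      Matrix (Fin (nopt n p.1)) (Fin (nopt n p.2)) F ⊗[F] Λ p.1 p.2) ≃ₗ[F] A) : Set A :=
  {x | ∃ (i j : Option I) (X : Matrix (Fin (nopt n i)) (Fin (nopt n j)) F) (a : Λ i j),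
      i ≠ j ∧ x = elt F ψ i j X a} ∪
  {x | ∃ (i : I) (X : Matrix (Fin (n i)) (Fin (n i)) F) (a : Λ (some i) (some i)),
      Matrix.trace X = 0 ∧ x = elt F ψ (some i) (some i) X a}

/-- `L`: the Lie subalgebra of `A` (as a subspace closed under commutators) generated by
the subspaces `V'_ij ⊗ Λ(i,j)` over all `(i,j) ≠ (0,0)`. -/
def Lsub (ψ : (⨁ p : Option I × Option I,
      Matrix (Fin (nopt n p.1)) (Fin (nopt n p.2)) F ⊗[F] Λ p.1 p.2) ≃ₗ[F] A) :
    Submodule F A :=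
  sInf {J : Submodule F A | lieGens F ψ ⊆ J ∧ ∀ x ∈ J, ∀ y ∈ J, x * y - y * x ∈ J}

variable (mu : ∀ i j k : Option I, Λ i j →ₗ[F] Λ j k →ₗ[F] Λ i k)
  (ψ : (⨁ p : Option I × Option I,
      Matrix (Fin (nopt n p.1)) (Fin (nopt n p.2)) F ⊗[F] Λ p.1 p.2) ≃ₗ[F] A)

/-!
`V_00 = F E` is one-dimensional and `Λ(0,0)` is spanned by products `ab` with `a ∈ Λ(0,i)`,
`b ∈ Λ(i,0)`, so by bilinearity it suffices to treat `[E ⊗ ab, E ⊗ cd]` with `c ∈ Λ(0,j)`,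
`d ∈ Λ(j,0)`. The commutator of the off-diagonal generators `e_{0p} ⊗ a` and `e_{p0} ⊗ b` is
`s = E ⊗ ab - e_pp ⊗ ba ∈ L`; likewise `t = E ⊗ cd - e_qq ⊗ dc ∈ L`. Blocks `(0,0)` and `(i,i)`
multiply to zero, so `[s, t] = [E ⊗ ab, E ⊗ cd] + [e_pp ⊗ ba, e_qq ⊗ dc]`. The last term vanishes
for `i ≠ j`; for `i = j` (taking `p = q`) it is `e_pp ⊗ [ba, dc]`, which lies in `L` by an
`sl_2`-computation inside block `i`, where `n_i ≥ 2` leaves room for a second index.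
-/

theorem LinearMap.apply_mem_of_span_eq_top {R M N P : Type*} [CommSemiring R]
    [AddCommMonoid M] [AddCommMonoid N] [AddCommMonoid P] [Module R M] [Module R N] [Module R P]
    (B : M →ₗ[R] N →ₗ[R] P) {s : Set M} {t : Set N} {p : Submodule R P}
    (hs : Submodule.span R s = ⊤) (ht : Submodule.span R t = ⊤)
    (h : ∀ x ∈ s, ∀ y ∈ t, B x y ∈ p) (x : M) (y : N) : B x y ∈ p := by
  have hle : Submodule.map₂ B ⊤ ⊤ ≤ p := by
    rw [← hs, ← ht, Submodule.map₂_span_span]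
    exact Submodule.span_le.2 (Set.image2_subset_iff.2 h)
  exact Submodule.map₂_le.1 hle x trivial y trivial

theorem TensorProduct.span_tmul_image_eq_top {R M N : Type*} [CommSemiring R]
    [AddCommMonoid M] [AddCommMonoid N] [Module R M] [Module R N] {m : M}
    (hm : Submodule.span R {m} = ⊤) {s : Set N} (hs : Submodule.span R s = ⊤) :
    Submodule.span R ((m ⊗ₜ[R] ·) '' s) = ⊤ := by
  have h := Submodule.map₂_span_span R (TensorProduct.mk R M N) {m} s
  rwa [hm, hs, TensorProduct.map₂_mk_top_top_eq_top, Set.image2_singleton_left, eq_comm] at h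

theorem Matrix.span_single_one_eq_top {ι R : Type*} [Subsingleton ι] [DecidableEq ι]
    [CommSemiring R] (z : ι) : Submodule.span R {Matrix.single z z (1 : R)} = ⊤ := by
  refine Submodule.eq_top_iff'.2 fun X => Submodule.mem_span_singleton.2 ⟨X z z, ?_⟩
  ext a b
  rw [Subsingleton.elim a z, Subsingleton.elim b z]
  simp

theorem commutator_sub_sub_of_mul_eq_zero {R : Type*} [NonUnitalRing R] {x y z w : R}
    (hxw : x * w = 0) (hwx : w * x = 0) (hyz : y * z = 0) (hzy : z * y = 0) :
    (x - y) * (z - w) - (z - w) * (x - y) = (x * z - z * x) + (y * w - w * y) := by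
  simp only [sub_mul, mul_sub, hxw, hwx, hyz, hzy]
  abel

section

omit [IsAlgClosed F] [Fintype I] [Nonempty I] [SMulCommClass F A A] [IsScalarTower F A A]

theorem lieGens_subset_Lsub : lieGens F ψ ⊆ Lsub F ψ := fun _ hx =>
  Submodule.mem_sInf.2 fun _ hJ => hJ.1 hx

theorem commutator_mem_Lsub {x y : A} (hx : x ∈ Lsub F ψ) (hy : y ∈ Lsub F ψ) :
    x * y - y * x ∈ Lsub F ψ := by
  rw [Lsub, Submodule.mem_sInf] at *
  exact fun J hJ => hJ.2 x (hx J hJ) y (hy J hJ)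

theorem elt_mem_Lsub_of_ne {i j : Option I} (hij : i ≠ j)
    (X : Matrix (Fin (nopt n i)) (Fin (nopt n j)) F) (a : Λ i j) :
    elt F ψ i j X a ∈ Lsub F ψ :=
  lieGens_subset_Lsub F ψ (Or.inl ⟨i, j, X, a, hij, rfl⟩)

theorem elt_mem_Lsub_of_trace_eq_zero {i : I} {X : Matrix (Fin (n i)) (Fin (n i)) F}
    (hX : X.trace = 0) (a : Λ (some i) (some i)) :
    elt F ψ (some i) (some i) X a ∈ Lsub F ψ :=
  lieGens_subset_Lsub F ψ (Or.inr ⟨i, X, a, hX, rfl⟩)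

theorem elt_sub_left {i j : Option I} (X Y : Matrix (Fin (nopt n i)) (Fin (nopt n j)) F)
    (a : Λ i j) : elt F ψ i j (X - Y) a = elt F ψ i j X a - elt F ψ i j Y a := by
  simp [elt, emb, TensorProduct.sub_tmul]

theorem elt_sub_right {i j : Option I} (X : Matrix (Fin (nopt n i)) (Fin (nopt n j)) F)
    (a b : Λ i j) : elt F ψ i j X (a - b) = elt F ψ i j X a - elt F ψ i j X b := by
  simp [elt, emb, TensorProduct.tmul_sub]

variable (hmul : ∀ (i j k : Option I) (X : Matrix (Fin (nopt n i)) (Fin (nopt n j)) F)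
      (a : Λ i j) (Y : Matrix (Fin (nopt n j)) (Fin (nopt n k)) F) (b : Λ j k),
      elt F ψ i j X a * elt F ψ j k Y b = elt F ψ i k (X * Y) (mu i j k a b))
include hmul

theorem elt_single_sub_elt_single_mem_Lsub {i j : Option I} (hij : i ≠ j)
    (p : Fin (nopt n i)) (q : Fin (nopt n j)) (a : Λ i j) (b : Λ j i) :
    elt F ψ i i (Matrix.single p p 1) (mu i j i a b)
      - elt F ψ j j (Matrix.single q q 1) (mu j i j b a) ∈ Lsub F ψ := by
  have h := commutator_mem_Lsub F ψ (elt_mem_Lsub_of_ne F ψ hij (Matrix.single p q 1) a)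
    (elt_mem_Lsub_of_ne F ψ hij.symm (Matrix.single q p 1) b)
  rwa [hmul, hmul, Matrix.single_mul_single_same, Matrix.single_mul_single_same, one_mul] at h

/-- `[e_pq ⊗ α, e_qp ⊗ β] = e_pp ⊗ αβ - e_qq ⊗ βα`, and `(e_pp - e_qq) ⊗ βα` is a generator. -/
theorem elt_single_commutator_mem_Lsub {i : I} {p q : Fin (n i)} (hpq : p ≠ q)
    (α β : Λ (some i) (some i)) :
    elt F ψ (some i) (some i) (Matrix.single p p 1)
      (mu (some i) (some i) (some i) α β - mu (some i) (some i) (some i) β α) ∈ Lsub F ψ := by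
  have hbracket := commutator_mem_Lsub F ψ
    (elt_mem_Lsub_of_trace_eq_zero F ψ (Matrix.trace_single_eq_of_ne p q 1 hpq) α)
    (elt_mem_Lsub_of_trace_eq_zero F ψ (Matrix.trace_single_eq_of_ne q p 1 hpq.symm) β)
  rw [hmul, hmul, Matrix.single_mul_single_same, Matrix.single_mul_single_same,
    one_mul] at hbracket
  have hdiag : elt F ψ (some i) (some i) (Matrix.single p p 1 - Matrix.single q q 1)
      (mu (some i) (some i) (some i) β α) ∈ Lsub F ψ :=
    elt_mem_Lsub_of_trace_eq_zero F ψ (by simp [Matrix.trace_sub]) _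
  rw [elt_sub_right]
  convert Submodule.sub_mem _ hbracket hdiag using 1
  rw [elt_sub_left]
  abel

variable (hmul0 : ∀ (i j s t : Option I), j ≠ s →
      ∀ (X : Matrix (Fin (nopt n i)) (Fin (nopt n j)) F) (a : Λ i j)
        (Y : Matrix (Fin (nopt n s)) (Fin (nopt n t)) F) (b : Λ s t),
      elt F ψ i j X a * elt F ψ s t Y b = 0)
include hmul0

theorem commutator_elt_single_mem_Lsub (p : ∀ i : I, Fin (n i)) [∀ i, Nontrivial (Fin (n i))]
    (i j : I) (α : Λ (some i) (some i)) (β : Λ (some j) (some j)) :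
    elt F ψ (some i) (some i) (Matrix.single (p i) (p i) 1) α
        * elt F ψ (some j) (some j) (Matrix.single (p j) (p j) 1) β
      - elt F ψ (some j) (some j) (Matrix.single (p j) (p j) 1) β
        * elt F ψ (some i) (some i) (Matrix.single (p i) (p i) 1) α ∈ Lsub F ψ := by
  rcases eq_or_ne i j with rfl | hij
  · obtain ⟨q, hq⟩ := exists_ne (p i)
    rw [hmul, hmul, Matrix.single_mul_single_same, one_mul, ← elt_sub_right]
    exact elt_single_commutator_mem_Lsub F mu ψ hmul hq.symm α β
  · rw [hmul0 _ _ _ _ (by simpa using hij), hmul0 _ _ _ _ (by simpa using hij.symm), sub_self]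
    exact zero_mem _

theorem commutator_elt_mul_mem_Lsub (p : ∀ i : I, Fin (n i)) [∀ i, Nontrivial (Fin (n i))]
    (i j : I) (a : Λ none (some i)) (b : Λ (some i) none) (c : Λ none (some j))
    (d : Λ (some j) none) :
    elt F ψ none none (Matrix.single 0 0 1) (mu none (some i) none a b)
        * elt F ψ none none (Matrix.single 0 0 1) (mu none (some j) none c d)
      - elt F ψ none none (Matrix.single 0 0 1) (mu none (some j) none c d)
        * elt F ψ none none (Matrix.single 0 0 1) (mu none (some i) none a b) ∈ Lsub F ψ := by
  have hs := elt_single_sub_elt_single_mem_Lsub F mu ψ hmul (Option.some_ne_none i).symm 0 (p i) a b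
  have ht := elt_single_sub_elt_single_mem_Lsub F mu ψ hmul (Option.some_ne_none j).symm 0 (p j) c d
  have h := commutator_mem_Lsub F ψ hs ht
  rw [commutator_sub_sub_of_mul_eq_zero (hmul0 _ _ _ _ (by simp) _ _ _ _)
    (hmul0 _ _ _ _ (by simp) _ _ _ _) (hmul0 _ _ _ _ (by simp) _ _ _ _)
    (hmul0 _ _ _ _ (by simp) _ _ _ _)] at h
  exact (Submodule.add_mem_iff_left _
    (commutator_elt_single_mem_Lsub F mu ψ hmul hmul0 p i j _ _)).1 h

end

set_option linter.unusedSectionVars false in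
theorem commutator_V00_V00_mem_Lsub
    -- sizes: `n_i ≥ 2`, and `n_i ≥ 3` in characteristic 2
    (hn2 : ∀ i : I, 2 ≤ n i)
    -- `Λ(0,0) = Σ_{i ∈ I} Λ(0,i)Λ(i,0)`
    (h00 : ∀ x : Λ none none, x ∈ Submodule.span F
      {y : Λ none none | ∃ (i : I) (a : Λ none (some i)) (b : Λ (some i) none),
        y = mu none (some i) none a b})
    -- the product of `A`: `(X ⊗ λ)(Y ⊗ μ) = XY ⊗ λμ` for matching inner indices …
    (hmul : ∀ (i j k : Option I) (X : Matrix (Fin (nopt n i)) (Fin (nopt n j)) F)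
      (a : Λ i j) (Y : Matrix (Fin (nopt n j)) (Fin (nopt n k)) F) (b : Λ j k),
      elt F ψ i j X a * elt F ψ j k Y b = elt F ψ i k (X * Y) (mu i j k a b))
    -- … and `0` otherwise
    (hmul0 : ∀ (i j s t : Option I), j ≠ s →
      ∀ (X : Matrix (Fin (nopt n i)) (Fin (nopt n j)) F) (a : Λ i j)
        (Y : Matrix (Fin (nopt n s)) (Fin (nopt n t)) F) (b : Λ s t),
      elt F ψ i j X a * elt F ψ s t Y b = 0)
    :
    -- the commutator of any two elements of `V_00 ⊗ Λ(0,0)` lies in `L`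
    ∀ u v : Matrix (Fin (nopt n none)) (Fin (nopt n none)) F ⊗[F] Λ none none,
      emb F ψ (none, none) u * emb F ψ (none, none) v
        - emb F ψ (none, none) v * emb F ψ (none, none) u ∈ Lsub F ψ := by
  intro u v
  have (i : I) : Nontrivial (Fin (n i)) := Fin.nontrivial_iff_two_le.2 (hn2 i)
  let e := ψ.toLinearMap ∘ₗ DirectSum.lof F _
    (fun q => Matrix (Fin (nopt n q.1)) (Fin (nopt n q.2)) F ⊗[F] Λ q.1 q.2) (none, none)
  let commutator := LinearMap.mul F A - (LinearMap.mul F A).flip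
  have : Subsingleton (Fin (nopt n none)) := inferInstanceAs (Subsingleton (Fin 1))
  have hspan := TensorProduct.span_tmul_image_eq_top
    (Matrix.span_single_one_eq_top (ι := Fin (nopt n none)) (R := F) 0)
    (Submodule.eq_top_iff'.2 h00)
  refine (commutator.compl₁₂ e e).apply_mem_of_span_eq_top hspan hspan ?_ u v
  rintro _ ⟨_, ⟨i, a, b, rfl⟩, rfl⟩ _ ⟨_, ⟨j, c, d, rfl⟩, rfl⟩
  exact commutator_elt_mul_mem_Lsub F mu ψ hmul hmul0 (fun i => ⟨0, by have := hn2 i; omega⟩)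
    i j a b c d
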